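/- Assume the direct-system setup with the interleaving hypothesis (H) and properties (S) and (K). Then for every n, ker(i_n) ⊆ ker(i_{n,n+3}); that is, if x ∈ F_n satisfies i_n(x) = 0 in F_∞, then i_{n,n+3}(x) = 0 in F_{n+3}. -/

import Mathlib

/-!
Push `x` forward along the interleaving: since `i_{n,m} x = 0` for some `m`, the element
`a_n x ∈ G_{n+1}` dies in the limit `G_∞`, so by (K) it already dies in `G_{n+2}`. Applying
`b_{n+2}` and using `b_{n+2} ∘ j_{n+1,n+2} ∘ a_n = i_{n+2,n+3} ∘ b_{n+1} ∘ a_n = i_{n,n+3}`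
gives `i_{n,n+3} x = 0`.
-/

section ShiftMap

variable {F G : ℕ → Type*} [∀ n, AddZeroClass (F n)] [∀ n, AddZeroClass (G n)]
  {i2 : ∀ n m : ℕ, n ≤ m → (F n →+ F m)} {j2 : ∀ n m : ℕ, n ≤ m → (G n →+ G m)}
  {a : ∀ n, F n →+ G (n+1)} {N : ℕ}

theorem transition_shiftMap_eq_shiftMap_transition
    (hFcomp : ∀ (n m l : ℕ) (h1 : n ≤ m) (h2 : m ≤ l) (x : F n),
      i2 m l h2 (i2 n m h1 x) = i2 n l (h1.trans h2) x)
    (hGcomp : ∀ (n m l : ℕ) (h1 : n ≤ m) (h2 : m ≤ l) (y : G n),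
      j2 m l h2 (j2 n m h1 y) = j2 n l (h1.trans h2) y)
    (hac : ∀ n, n + 1 ≤ N → ∀ x : F n,
      a (n+1) (i2 n (n+1) n.le_succ x) = j2 (n+1) (n+2) (n+1).le_succ (a n x))
    {n p : ℕ} (hnp : n ≤ p) (hpN : p + 1 ≤ N) (x : F n) :
    j2 (n+1) (p+2) (by omega) (a n x) = a (p+1) (i2 n (p+1) (by omega) x) := by
  induction p, hnp using Nat.le_induction with
  | base => exact (hac n hpN x).symm
  | succ p hnp ih =>
    rw [← hGcomp (n+1) (p+2) (p+1+2) (by omega) (by omega), ih (by omega),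
      ← hFcomp n (p+1) (p+1+1) (by omega) (by omega), hac (p+1) hpN]

theorem shiftMap_eq_zero_of_transition_eq_zero {L : Type*} [AddZeroClass L]
    (hFcomp : ∀ (n m l : ℕ) (h1 : n ≤ m) (h2 : m ≤ l) (x : F n),
      i2 m l h2 (i2 n m h1 x) = i2 n l (h1.trans h2) x)
    (hGcomp : ∀ (n m l : ℕ) (h1 : n ≤ m) (h2 : m ≤ l) (y : G n),
      j2 m l h2 (j2 n m h1 y) = j2 n l (h1.trans h2) y)
    (hac : ∀ n, n + 1 ≤ N → ∀ x : F n,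
      a (n+1) (i2 n (n+1) n.le_succ x) = j2 (n+1) (n+2) (n+1).le_succ (a n x))
    {j : ∀ n, G n →+ L} (hjcompat : ∀ (n m : ℕ) (h : n ≤ m) (y : G n), j m (j2 n m h y) = j n y)
    {n m : ℕ} (hnm : n < m) (hmN : m ≤ N) {x : F n} (hx : i2 n m hnm.le x = 0) :
    j (n+1) (a n x) = 0 := by
  obtain ⟨p, rfl⟩ : ∃ p, m = p + 1 := ⟨m - 1, by omega⟩
  calc j (n+1) (a n x) = j (p+2) (j2 (n+1) (p+2) (by omega) (a n x)) := (hjcompat _ _ _ _).symm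
    _ = j (p+2) (a (p+1) (i2 n (p+1) hnm.le x)) := by
      rw [transition_shiftMap_eq_shiftMap_transition hFcomp hGcomp hac (by omega) hmN]
    _ = 0 := by rw [hx, map_zero, map_zero]

end ShiftMap

/-- Claim 3.3 of the paper: under the direct-system setup with the interleaving
hypothesis (H) and properties (S) and (K), `ker(i_n) ⊆ ker(i_{n,n+3})`. -/
theorem ker_i_subset_ker_transition
    (F : ℕ → Type) [∀ n, AddCommGroup (F n)]
    (Finf : Type) [AddCommGroup Finf]
    (i2 : ∀ n m : ℕ, n ≤ m → (F n →+ F m))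
    (i : ∀ n, F n →+ Finf)
    (hFcomp : ∀ (n m l : ℕ) (h1 : n ≤ m) (h2 : m ≤ l) (x : F n),
      i2 m l h2 (i2 n m h1 x) = i2 n l (h1.trans h2) x)
    (hiker : ∀ (n : ℕ) (x : F n), i n x = 0 → ∃ (m : ℕ) (h : n ≤ m), i2 n m h x = 0)
    (G : ℕ → ℕ → Type) [∀ k n, AddCommGroup (G k n)]
    (Ginf : ℕ → Type) [∀ k, AddCommGroup (Ginf k)]
    (j2 : ∀ (k n m : ℕ), n ≤ m → (G k n →+ G k m))
    (j : ∀ k n, G k n →+ Ginf k)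
    (hGcomp : ∀ (k n m l : ℕ) (h1 : n ≤ m) (h2 : m ≤ l) (y : G k n),
      j2 k m l h2 (j2 k n m h1 y) = j2 k n l (h1.trans h2) y)
    (hjcompat : ∀ (k n m : ℕ) (h : n ≤ m) (y : G k n), j k m (j2 k n m h y) = j k n y)
    (hH : ∀ n₀ : ℕ, ∃ (k : ℕ) (a : ∀ n, F n →+ G k (n+1)) (b : ∀ n, G k n →+ F (n+1)),
      (∀ n, n + 1 ≤ n₀ → ∀ x : F n,
        a (n+1) (i2 n (n+1) (by omega) x) = j2 k (n+1) (n+2) (by omega) (a n x)) ∧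
      (∀ n, n + 1 ≤ n₀ → ∀ y : G k n,
        b (n+1) (j2 k n (n+1) (by omega) y) = i2 (n+1) (n+2) (by omega) (b n y)) ∧
      (∀ n, n + 1 ≤ n₀ → ∀ x : F n, b (n+1) (a n x) = i2 n (n+2) (by omega) x) ∧
      (∀ n, n + 1 ≤ n₀ → ∀ y : G k n, a (n+1) (b n y) = j2 k n (n+2) (by omega) y))
    (hK : ∀ (k n : ℕ) (y : G k n), j k n y = 0 → j2 k n (n+1) (by omega) y = 0)
    : ∀ (n : ℕ) (x : F n), i n x = 0 → i2 n (n+3) (by omega) x = 0 := by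
  intro n x hx
  obtain ⟨m, hnm, hm⟩ := hiker n x hx
  have hm' : i2 n (m+1) (by omega) x = 0 := by
    rw [← hFcomp n m (m+1) hnm (by omega), hm, map_zero]
  -- the window `m + 2 ≥ n + 2` is large enough for the square
  -- `b_{n+2} ∘ j_{n+1,n+2} = i_{n+2,n+3} ∘ b_{n+1}`
  obtain ⟨k, a, b, hac, hbc, hba, -⟩ := hH (m+2)
  have hax : j2 k (n+1) (n+2) (by omega) (a n x) = 0 :=
    hK k (n+1) (a n x) <| shiftMap_eq_zero_of_transition_eq_zero (hFcomp := hFcomp)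
      (hGcomp := hGcomp k) hac (hjcompat k) (by omega) (by omega) hm'
  calc i2 n (n+3) (by omega) x = i2 (n+2) (n+3) (by omega) (i2 n (n+2) (by omega) x) :=
        (hFcomp _ _ _ _ _ x).symm
    _ = i2 (n+2) (n+3) (by omega) (b (n+1) (a n x)) := by rw [hba n (by omega)]
    _ = b (n+2) (j2 k (n+1) (n+2) (by omega) (a n x)) := (hbc (n+1) (by omega) _).symm
    _ = 0 := by rw [hax, map_zero]
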